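/- With the same setting (Aᵢ : X → Yᵢ, B = (1/n)Σ Aᵢ*Aᵢ, L = maxᵢ‖Aᵢ‖², A the stacked operator), for any deterministic bounded linear operator R : X → X, any x ∈ X, and any index i ∈ {1,…,n}, the deterministic bound ‖R(B - Aᵢ*Aᵢ)x‖ ≤ min(√L·‖R‖, √n·‖R B^{1/2}‖)·‖Ax‖ holds. -/

import Mathlib

/-!
Put `u = R B x` and `vⱼ = R Aⱼ* Aⱼ x`, so that `∑ⱼ vⱼ = n u`. Then
`‖u - vᵢ‖² ≤ ∑ⱼ ‖u - vⱼ‖² = ∑ⱼ ‖vⱼ‖² - n ‖u‖² ≤ ∑ⱼ ‖vⱼ‖²`, and `‖vⱼ‖ ≤ ‖R Aⱼ*‖ ‖Aⱼ x‖`.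
The factor `‖R Aⱼ*‖` is at most `‖R‖ ‖Aⱼ‖ ≤ √L ‖R‖`, and also at most `√n ‖R B^{1/2}‖`:
passing to adjoints, `‖Aⱼ R* z‖² ≤ ∑ₖ ‖Aₖ R* z‖² = n ‖B^{1/2} R* z‖²`.
-/

open RCLike
open scoped InnerProductSpace

section Variance

variable {E ι : Type*} [NormedAddCommGroup E] [Fintype ι]

theorem sum_norm_sub_sq_eq_of_sum_eq_card_nsmul (𝕜 : Type*) [RCLike 𝕜] [InnerProductSpace 𝕜 E]
    {u : E} {v : ι → E} (h : ∑ j, v j = Fintype.card ι • u) :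
    ∑ j, ‖u - v j‖ ^ 2 = ∑ j, ‖v j‖ ^ 2 - Fintype.card ι * ‖u‖ ^ 2 := by
  have hinner : ∑ j, re ⟪u, v j⟫_𝕜 = Fintype.card ι * ‖u‖ ^ 2 := by
    rw [← map_sum, ← inner_sum, h, ← Nat.cast_smul_eq_nsmul 𝕜, inner_smul_right,
      inner_self_eq_norm_sq_to_K]
    norm_cast
  simp only [norm_sub_sq (𝕜 := 𝕜), Finset.sum_add_distrib, Finset.sum_sub_distrib,
    Finset.sum_const, ← Finset.mul_sum, hinner, Finset.card_univ, nsmul_eq_mul]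
  ring

theorem norm_sub_le_of_sum_eq_card_nsmul (𝕜 : Type*) [RCLike 𝕜] [InnerProductSpace 𝕜 E]
    {u : E} {v : ι → E} (h : ∑ j, v j = Fintype.card ι • u) {C : ℝ} (hC : 0 ≤ C)
    {a : ι → ℝ} (hv : ∀ j, ‖v j‖ ≤ C * a j) (i : ι) :
    ‖u - v i‖ ≤ C * √(∑ j, a j ^ 2) := by
  refine (pow_le_pow_iff_left₀ (norm_nonneg _) (by positivity) two_ne_zero).mp ?_
  calc ‖u - v i‖ ^ 2 ≤ ∑ j, ‖u - v j‖ ^ 2 :=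
        Finset.single_le_sum (f := fun j => ‖u - v j‖ ^ 2) (fun j _ => by positivity)
          (Finset.mem_univ i)
    _ ≤ ∑ j, ‖v j‖ ^ 2 := by
        rw [sum_norm_sub_sq_eq_of_sum_eq_card_nsmul 𝕜 h]
        linarith [show 0 ≤ (Fintype.card ι : ℝ) * ‖u‖ ^ 2 by positivity]
    _ ≤ ∑ j, (C * a j) ^ 2 :=
        Finset.sum_le_sum fun j _ => pow_le_pow_left₀ (norm_nonneg _) (hv j) 2
    _ = (C * √(∑ j, a j ^ 2)) ^ 2 := by
        rw [mul_pow, Real.sq_sqrt (by positivity), Finset.mul_sum]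
        simp only [mul_pow]

end Variance

namespace ContinuousLinearMap

section Adjoint

variable {𝕜 E F G H : Type*} [RCLike 𝕜]
  [NormedAddCommGroup E] [InnerProductSpace 𝕜 E] [CompleteSpace E]
  [NormedAddCommGroup F] [InnerProductSpace 𝕜 F] [CompleteSpace F]
  [NormedAddCommGroup G] [InnerProductSpace 𝕜 G] [CompleteSpace G]
  [NormedAddCommGroup H] [InnerProductSpace 𝕜 H] [CompleteSpace H]

theorem norm_comp_adjoint_comm (R : E →L[𝕜] H) (S : E →L[𝕜] F) :
    ‖R ∘L adjoint S‖ = ‖S ∘L adjoint R‖ := by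
  rw [← adjoint.norm_map, adjoint_comp, adjoint_adjoint]

theorem norm_comp_adjoint_le_of_norm_apply_le {S : E →L[𝕜] F} {T : E →L[𝕜] G} {c : ℝ}
    (hc : 0 ≤ c) (hST : ∀ w, ‖S w‖ ≤ c * ‖T w‖) (R : E →L[𝕜] H) :
    ‖R ∘L adjoint S‖ ≤ c * ‖R ∘L adjoint T‖ := by
  rw [norm_comp_adjoint_comm R S, norm_comp_adjoint_comm R T]
  refine opNorm_le_bound _ (by positivity) fun z => ?_
  calc ‖S (adjoint R z)‖ ≤ c * ‖T (adjoint R z)‖ := hST _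
    _ ≤ c * (‖T ∘L adjoint R‖ * ‖z‖) := by gcongr; exact le_opNorm (T ∘L adjoint R) z
    _ = c * ‖T ∘L adjoint R‖ * ‖z‖ := by ring

end Adjoint

section SquareRoot

variable {E G ι : Type*} [NormedAddCommGroup E] [InnerProductSpace ℂ E] [CompleteSpace E]
  [NormedAddCommGroup G] [InnerProductSpace ℂ G] [CompleteSpace G] [Fintype ι]
  {F : ι → Type*} [∀ j, NormedAddCommGroup (F j)] [∀ j, InnerProductSpace ℂ (F j)]
  [∀ j, CompleteSpace (F j)] {A : ∀ j, E →L[ℂ] F j} {B : E →L[ℂ] E}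

theorem re_inner_apply_self_eq_norm_sqrt_apply_sq (hB : 0 ≤ B) (w : E) :
    re ⟪B w, w⟫_ℂ = ‖CFC.sqrt B w‖ ^ 2 := by
  rw [apply_norm_sq_eq_inner_adjoint_left, (CFC.sqrt_nonneg B).isSelfAdjoint.adjoint_eq,
    ← mul_def, CFC.sqrt_mul_sqrt_self B]

theorem sum_norm_apply_sq_eq_card_mul_norm_sqrt_apply_sq
    (hB : Fintype.card ι • B = ∑ j, adjoint (A j) ∘L A j) (hB0 : 0 ≤ B) (w : E) :
    ∑ j, ‖A j w‖ ^ 2 = Fintype.card ι * ‖CFC.sqrt B w‖ ^ 2 := by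
  calc ∑ j, ‖A j w‖ ^ 2 = re ⟪(∑ j, adjoint (A j) ∘L A j) w, w⟫_ℂ := by
        simp only [apply_norm_sq_eq_inner_adjoint_left, sum_apply, sum_inner, map_sum]
    _ = Fintype.card ι * ‖CFC.sqrt B w‖ ^ 2 := by
        rw [← hB, smul_apply, ← Nat.cast_smul_eq_nsmul ℂ, inner_smul_left, Complex.conj_natCast,
          ← RCLike.ofReal_natCast, re_ofReal_mul, re_inner_apply_self_eq_norm_sqrt_apply_sq hB0]

theorem norm_comp_adjoint_le_sqrt_card_mul_norm_comp_sqrt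
    (hB : Fintype.card ι • B = ∑ j, adjoint (A j) ∘L A j) (hB0 : 0 ≤ B) (R : E →L[ℂ] G) (j : ι) :
    ‖R ∘L adjoint (A j)‖ ≤ √(Fintype.card ι) * ‖R ∘L CFC.sqrt B‖ := by
  have hA : ∀ w, ‖A j w‖ ≤ √(Fintype.card ι) * ‖CFC.sqrt B w‖ := fun w => by
    rw [← Real.sqrt_sq (norm_nonneg (CFC.sqrt B w)), ← Real.sqrt_mul (by positivity),
      ← sum_norm_apply_sq_eq_card_mul_norm_sqrt_apply_sq hB hB0]
    exact Real.le_sqrt_of_sq_le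
      (Finset.single_le_sum (f := fun k => ‖A k w‖ ^ 2) (fun k _ => by positivity)
        (Finset.mem_univ j))
  simpa only [(CFC.sqrt_nonneg B).isSelfAdjoint.adjoint_eq] using
    norm_comp_adjoint_le_of_norm_apply_le (by positivity) hA R

end SquareRoot

end ContinuousLinearMap

open ContinuousLinearMap in
theorem stmt7 {E : Type*} [NormedAddCommGroup E] [InnerProductSpace ℂ E] [CompleteSpace E]
    {n : ℕ} {F : Fin n → Type*} [∀ i, NormedAddCommGroup (F i)]
    [∀ i, InnerProductSpace ℂ (F i)] [∀ i, CompleteSpace (F i)]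
    (A : ∀ i, E →L[ℂ] F i)
    (B : E →L[ℂ] E) (hB : B = (n : ℝ)⁻¹ • ∑ i, (adjoint (A i)).comp (A i))
    (L : ℝ) (hL : L = ⨆ i, ‖A i‖ ^ 2)
    (R : E →L[ℂ] E) (x : E) (i : Fin n) :
    ‖R ((B - (adjoint (A i)).comp (A i)) x)‖
      ≤ min (Real.sqrt L * ‖R‖) (Real.sqrt n * ‖R * CFC.sqrt B‖)
          * Real.sqrt (∑ j, ‖A j x‖ ^ 2) := by
  have hn : (n : ℝ) ≠ 0 := Nat.cast_ne_zero.mpr i.pos.ne'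
  have hnB : Fintype.card (Fin n) • B = ∑ j, adjoint (A j) ∘L A j := by
    rw [Fintype.card_fin, hB, ← Nat.cast_smul_eq_nsmul ℝ, smul_inv_smul₀ hn]
  have hB0 : 0 ≤ B := by
    rw [hB]
    exact smul_nonneg (by positivity) (Finset.sum_nonneg fun j _ =>
      (nonneg_iff_isPositive _).mpr (isPositive_adjoint_comp_self (A j)))
  have hAL : ∀ j, ‖A j‖ ≤ √L := fun j =>
    Real.le_sqrt_of_sq_le (hL ▸ le_ciSup (Set.finite_range fun k => ‖A k‖ ^ 2).bddAbove j)
  have hRA : ∀ j, ‖R ∘L adjoint (A j)‖ ≤ min (√L * ‖R‖) (√n * ‖R * CFC.sqrt B‖) := by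
    intro j
    refine le_min ?_ ?_
    · calc ‖R ∘L adjoint (A j)‖ ≤ ‖R‖ * ‖adjoint (A j)‖ := opNorm_comp_le _ _
        _ = ‖A j‖ * ‖R‖ := by rw [adjoint.norm_map, mul_comm]
        _ ≤ √L * ‖R‖ := by gcongr; exact hAL j
    · simpa [mul_def] using norm_comp_adjoint_le_sqrt_card_mul_norm_comp_sqrt hnB hB0 R j
  have hsum : ∑ j, R (adjoint (A j) (A j x)) = Fintype.card (Fin n) • R (B x) := by
    rw [← map_nsmul, ← smul_apply, hnB]
    simp [sum_apply]
  simpa [map_sub] using norm_sub_le_of_sum_eq_card_nsmul ℂ hsum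
    (le_min (by positivity) (by positivity))
    (fun j => (le_opNorm (R ∘L adjoint (A j)) (A j x)).trans
      (mul_le_mul_of_nonneg_right (hRA j) (norm_nonneg _))) i
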